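/- Let I_j be an itemset and k_j = |{i : 1 ≤ i ≤ m'', I_{s_i} ⊆ I_j}| ≥ 1. If (β, y) encodes exactly the itemset I_j (i.e., y_i = 1 iff I_{s_i} ⊆ I_j), then the cut constraint Σ_{i : I_{s_i} ⊆ I_j} y_i − k_j · Σ_{i : I_{s_i} ⊄ I_j} y_i ≤ k_j − 1 is violated. Hence each column j ∈ U is infeasible for the PRICE formulation (Proposition: each column in U is excluded). -/
import Mathlib


/-- If `y` encodes exactly the saturated column `I_j`, then the cut constraint
for `I_j` is violated; hence each column in `U` is infeasible for PRICE. -/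
theorem saturated_column_infeasible {n m : ℕ}
    (Is : Fin m → Finset (Fin n)) (Ij : Finset (Fin n))
    (kj : ℕ)
    (hkj : kj = (Finset.univ.filter (fun i => Is i ⊆ Ij)).card)
    (hkj1 : 1 ≤ kj)
    (y : Fin m → ℚ)
    (hy : ∀ i, y i = if Is i ⊆ Ij then 1 else 0) :
    ¬ ((∑ i ∈ Finset.univ.filter (fun i => Is i ⊆ Ij), y i)
        - (kj : ℚ) * ∑ i ∈ Finset.univ.filter (fun i => ¬ Is i ⊆ Ij), y i
        ≤ (kj : ℚ) - 1) := by
  have h1 : (∑ i ∈ Finset.univ.filter (fun i => Is i ⊆ Ij), y i) = (kj : ℚ) := by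
    rw [hkj]
    push_cast
    rw [Finset.card_eq_sum_ones]
    push_cast
    apply Finset.sum_congr rfl
    intro i hi
    simp only [Finset.mem_filter] at hi
    rw [hy, if_pos hi.2]
  have h2 : (∑ i ∈ Finset.univ.filter (fun i => ¬ Is i ⊆ Ij), y i) = 0 := by
    apply Finset.sum_eq_zero
    intro i hi
    simp only [Finset.mem_filter] at hi
    rw [hy, if_neg hi.2]
  rw [h1, h2]
  simp
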